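/- arXiv:1205.4923 — 3 statements merged into one kernel-verified Lean document; each statement's English description precedes it below -/
import Mathlib

section
/- Let k, m be natural numbers with 1 ≤ k ≤ m, let A be a real k × m matrix (A : Matrix (Fin k) (Fin m) ℝ) all of whose entries satisfy |A i l| ≤ 1, and let λ : Fin m → ℝ satisfy λ l ≥ 0 for all l. Suppose there is λ* > 0 such that every k-element subset S of Fin m contains an index l with λ l ≥ λ* (equivalently: for every injective map s : Fin k → Fin m there exists i with λ (s i) ≥ λ*). For t ∈ ℝ define the k × k matrix G(t) := A * Matrix.diagonal (fun l => Real.exp (−2 * Real.sqrt (λ l) * t)) * Aᵀ. Then for every t ≥ 0, det (G t) ≤ (m.choose k) * (Nat.factorial k)^2 * Real.exp (−2 * Real.sqrt λ* * t). -/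
open Matrix

/-- Leibniz bound: a `k × k` real matrix with entries of absolute value at most `1`
has determinant of absolute value at most `k!`. -/
lemma abs_det_le_factorial {k : ℕ} (N : Matrix (Fin k) (Fin k) ℝ)
    (hN : ∀ i j, |N i j| ≤ 1) : |N.det| ≤ (Nat.factorial k : ℝ) := by
  rw [Matrix.det_apply']
  calc |∑ σ : Equiv.Perm (Fin k), (Equiv.Perm.sign σ : ℝ) * ∏ i, N (σ i) i|
      ≤ ∑ σ : Equiv.Perm (Fin k), |(Equiv.Perm.sign σ : ℝ) * ∏ i, N (σ i) i| :=
        Finset.abs_sum_le_sum_abs _ _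
    _ ≤ ∑ _σ : Equiv.Perm (Fin k), (1 : ℝ) := by
        refine Finset.sum_le_sum fun σ _ => ?_
        rw [abs_mul]
        have h1 : |(Equiv.Perm.sign σ : ℝ)| = 1 := by
          rcases Int.units_eq_one_or (Equiv.Perm.sign σ) with h | h <;> simp [h]
        rw [h1, one_mul, Finset.abs_prod]
        exact Finset.prod_le_one (fun i _ => abs_nonneg _) (fun i _ => hN _ _)
    _ = (Nat.factorial k : ℝ) := by
        simp [Fintype.card_perm]

/-- The key determinant estimate (inequality `detA`) in the proof of Lemma 1 of
the paper: if `A` has entries of absolute value at most `1`, the `λ l` are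
nonnegative, and every `k`-element subset of indices contains one with
`λ l ≥ λ*`, then the determinant of the Gram matrix
`G(t) = A · diag(exp(−2√(λ_l) t)) · Aᵀ` decays exponentially in `t ≥ 0`. -/
theorem det_gram_exponential_decay (k m : ℕ) (hk : 1 ≤ k) (hkm : k ≤ m)
    (A : Matrix (Fin k) (Fin m) ℝ) (hA : ∀ i l, |A i l| ≤ 1)
    (lam : Fin m → ℝ) (hlam : ∀ l, 0 ≤ lam l)
    (lamstar : ℝ) (hpos : 0 < lamstar)
    (hsub : ∀ s : Fin k → Fin m, Function.Injective s → ∃ i, lamstar ≤ lam (s i)) :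
    ∀ t : ℝ, 0 ≤ t →
      (A * Matrix.diagonal (fun l => Real.exp (-2 * Real.sqrt (lam l) * t)) * Aᵀ).det ≤
        (m.choose k : ℝ) * (Nat.factorial k : ℝ) ^ 2 *
          Real.exp (-2 * Real.sqrt lamstar * t) := by
  classical
  intro t ht
  set d : Fin m → ℝ := fun l => Real.exp (-2 * Real.sqrt (lam l) * t) with hd
  set E : ℝ := Real.exp (-2 * Real.sqrt lamstar * t) with hE
  have hE0 : 0 < E := Real.exp_pos _
  have hd0 : ∀ l, 0 < d l := fun l => Real.exp_pos _
  have hd1 : ∀ l, d l ≤ 1 := by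
    intro l
    rw [hd, Real.exp_le_one_iff]
    have := Real.sqrt_nonneg (lam l)
    nlinarith
  -- Expand the determinant via multilinearity in the rows.
  have key : (A * Matrix.diagonal d * Aᵀ).det =
      ∑ p : Fin k → Fin m,
        (∏ i, A i (p i) * d (p i)) * (Matrix.of fun i j => A j (p i)).det := by
    have h1 : (A * Matrix.diagonal d * Aᵀ) =
        Matrix.of (fun i => ∑ l, (A i l * d l) • (fun j => A j l)) := by
      have hAd : A * Matrix.diagonal d = Matrix.of fun i l => A i l * d l := by
        ext i l; simp [Matrix.mul_diagonal]
      rw [hAd]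
      ext i j
      simp [Matrix.mul_apply, Finset.sum_apply, mul_assoc]
    rw [h1]
    have h2 := (Matrix.detRowAlternating :
        (Fin k → ℝ) [⋀^Fin k]→ₗ[ℝ] ℝ).toMultilinearMap.map_sum
        (fun (i : Fin k) (l : Fin m) => (A i l * d l) • (fun j => A j l))
    have h3 : (Matrix.of (fun i => ∑ l, (A i l * d l) • (fun j => A j l))).det =
        (Matrix.detRowAlternating : (Fin k → ℝ) [⋀^Fin k]→ₗ[ℝ] ℝ).toMultilinearMap
          (fun i => ∑ l, (A i l * d l) • (fun j => A j l)) := rfl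
    rw [h3, h2]
    refine Finset.sum_congr rfl fun p _ => ?_
    rw [MultilinearMap.map_smul_univ]
    rfl
  -- bound each term
  have hterm : ∀ p : Fin k → Fin m,
      (∏ i, A i (p i) * d (p i)) * (Matrix.of fun i j => A j (p i)).det ≤
        (if Function.Injective p then E * (Nat.factorial k : ℝ) else 0) := by
    intro p
    by_cases hp : Function.Injective p
    · rw [if_pos hp]
      have habs : |(∏ i, A i (p i) * d (p i)) * (Matrix.of fun i j => A j (p i)).det| ≤
          E * (Nat.factorial k : ℝ) := by
        rw [abs_mul]
        have h4 : |∏ i, A i (p i) * d (p i)| ≤ E := by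
          rw [Finset.abs_prod]
          obtain ⟨i₀, hi₀⟩ := hsub p hp
          have hfac : ∀ i : Fin k, |A i (p i) * d (p i)| ≤ d (p i) := by
            intro i
            rw [abs_mul, abs_of_pos (hd0 (p i))]
            nlinarith [hA i (p i), abs_nonneg (A i (p i)), hd0 (p i)]
          calc ∏ i, |A i (p i) * d (p i)| ≤ ∏ i, d (p i) :=
                Finset.prod_le_prod (fun i _ => abs_nonneg _) (fun i _ => hfac i)
            _ = d (p i₀) * ∏ i ∈ Finset.univ.erase i₀, d (p i) :=
                (Finset.mul_prod_erase _ _ (Finset.mem_univ i₀)).symm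
            _ ≤ d (p i₀) * 1 := by
                refine mul_le_mul_of_nonneg_left ?_ (hd0 (p i₀)).le
                exact Finset.prod_le_one (fun i _ => (hd0 (p i)).le) (fun i _ => hd1 (p i))
            _ = d (p i₀) := mul_one _
            _ ≤ E := by
                rw [hd, hE, Real.exp_le_exp]
                have hs : Real.sqrt lamstar ≤ Real.sqrt (lam (p i₀)) :=
                  Real.sqrt_le_sqrt hi₀
                nlinarith
        have h5 : |(Matrix.of fun i j => A j (p i)).det| ≤ (Nat.factorial k : ℝ) :=
          abs_det_le_factorial _ (fun i j => hA j (p i))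
        exact mul_le_mul h4 h5 (abs_nonneg _) hE0.le
      exact (le_abs_self _).trans habs
    · rw [if_neg hp]
      rw [Function.not_injective_iff] at hp
      obtain ⟨i₁, i₂, he, hne⟩ := hp
      have hz : (Matrix.of fun i j => A j (p i)).det = 0 := by
        apply Matrix.det_zero_of_row_eq hne
        ext j
        simp [he]
      rw [hz, mul_zero]
  -- sum the bounds
  calc (A * Matrix.diagonal d * Aᵀ).det
      = ∑ p : Fin k → Fin m,
          (∏ i, A i (p i) * d (p i)) * (Matrix.of fun i j => A j (p i)).det := key
    _ ≤ ∑ p : Fin k → Fin m,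
          (if Function.Injective p then E * (Nat.factorial k : ℝ) else 0) :=
        Finset.sum_le_sum fun p _ => hterm p
    _ = ((Finset.univ.filter (fun p : Fin k → Fin m => Function.Injective p)).card : ℝ) *
          (E * (Nat.factorial k : ℝ)) := by
        rw [← Finset.sum_filter, Finset.sum_const, nsmul_eq_mul]
    _ = ((m.descFactorial k : ℕ) : ℝ) * (E * (Nat.factorial k : ℝ)) := by
        congr 2
        have h6 : (Finset.univ.filter (fun p : Fin k → Fin m => Function.Injective p)).card =
            Fintype.card {p : Fin k → Fin m // Function.Injective p} :=
          (Fintype.card_subtype _).symm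
        rw [h6, Fintype.card_congr (Equiv.subtypeInjectiveEquivEmbedding (Fin k) (Fin m)),
          Fintype.card_embedding_eq, Fintype.card_fin, Fintype.card_fin]
    _ = (m.choose k : ℝ) * (Nat.factorial k : ℝ) ^ 2 * E := by
        rw [Nat.descFactorial_eq_factorial_mul_choose]
        push_cast
        ring
end

section
/- Let k, m be natural numbers with 1 ≤ k ≤ m, let A be a real k × m matrix (A : Matrix (Fin k) (Fin m) ℝ) all of whose entries satisfy |A i l| ≤ 1, and let λ : Fin m → ℝ satisfy λ l ≥ 0 for all l. Suppose there is λ* > 0 such that every k-element subset S of Fin m contains an index l with λ l ≥ λ*. For t ∈ ℝ define G(t) := A * Matrix.diagonal (fun l => Real.exp (−2 * Real.sqrt (λ l) * t)) * Aᵀ. Then the function t ↦ Real.sqrt (det (G t)) is integrable on [0,∞) and ∫_{[0,∞)} Real.sqrt (det (G t)) dt ≤ Real.sqrt (m.choose k) * (Nat.factorial k) / Real.sqrt λ*. -/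
open Matrix

open MeasureTheory

section Aux
open Finset

lemma det_mul_diag_mul_transpose_eq {k m : ℕ} (A : Matrix (Fin k) (Fin m) ℝ)
    (d : Fin m → ℝ) :
    (A * Matrix.diagonal d * Aᵀ).det =
      ∑ f : Fin k → Fin m,
        (∏ i, A i (f i)) * (∏ i, d (f i)) * (Matrix.of fun i j => A i (f j)).det := by
  classical
  have hentry : ∀ p q : Fin k,
      (A * Matrix.diagonal d * Aᵀ) p q = ∑ l, A p l * d l * A q l := by
    intro p q
    simp only [Matrix.mul_apply, Matrix.transpose_apply, Matrix.diagonal_apply]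
    rw [Finset.sum_congr rfl fun l _ => ?_]
    rw [Finset.sum_eq_single l (by intro b _ hb; simp [hb]) (by simp)]
    simp
  rw [Matrix.det_apply']
  simp only [hentry]
  have hprod : ∀ σ : Equiv.Perm (Fin k),
      (∏ i, ∑ l, A (σ i) l * d l * A i l)
        = ∑ f : Fin k → Fin m, ∏ i, (A (σ i) (f i) * d (f i) * A i (f i)) := by
    intro σ
    rw [Finset.prod_univ_sum, Fintype.piFinset_univ]
  simp only [hprod, Finset.mul_sum]
  rw [Finset.sum_comm]
  refine Finset.sum_congr rfl fun f _ => ?_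
  rw [Matrix.det_apply', Finset.mul_sum, Finset.sum_congr rfl fun σ _ => ?_]
  simp only [Finset.prod_mul_distrib, Matrix.of_apply]
  ring

lemma det_gram_le (k m : ℕ) (A : Matrix (Fin k) (Fin m) ℝ)
    (hA : ∀ i l, |A i l| ≤ 1) (lam : Fin m → ℝ) (hlam : ∀ l, 0 ≤ lam l)
    (lamstar : ℝ) (hpos : 0 < lamstar)
    (hsub : ∀ s : Fin k → Fin m, Function.Injective s → ∃ i, lamstar ≤ lam (s i))
    {t : ℝ} (ht : 0 ≤ t) :
    (A * Matrix.diagonal (fun l => Real.exp (-2 * Real.sqrt (lam l) * t)) * Aᵀ).det ≤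
      (m.choose k : ℝ) * (k.factorial : ℝ) ^ 2 *
        (Real.exp (-Real.sqrt lamstar * t)) ^ 2 := by
  classical
  set b := Real.sqrt lamstar with hb
  set d : Fin m → ℝ := fun l => Real.exp (-2 * Real.sqrt (lam l) * t) with hd
  have hd0 : ∀ l, 0 ≤ d l := fun l => (Real.exp_pos _).le
  have hd1 : ∀ l, d l ≤ 1 := by
    intro l
    apply Real.exp_le_one_iff.mpr
    have h1 : 0 ≤ Real.sqrt (lam l) := Real.sqrt_nonneg _
    nlinarith
  have hdlt : ∀ l, lamstar ≤ lam l → d l ≤ Real.exp (-2 * b * t) := by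
    intro l hl
    apply Real.exp_le_exp.mpr
    have h1 : b ≤ Real.sqrt (lam l) := Real.sqrt_le_sqrt hl
    nlinarith
  rw [det_mul_diag_mul_transpose_eq]
  have habs : ∀ f : Fin k → Fin m,
      (∏ i, A i (f i)) * (∏ i, d (f i)) * (Matrix.of fun i j => A i (f j)).det ≤
        (if Function.Injective f then (k.factorial : ℝ) * Real.exp (-2 * b * t) else 0) := by
    intro f
    by_cases hf : Function.Injective f
    · rw [if_pos hf]
      calc (∏ i, A i (f i)) * (∏ i, d (f i)) * (Matrix.of fun i j => A i (f j)).det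
          ≤ |(∏ i, A i (f i)) * (∏ i, d (f i)) * (Matrix.of fun i j => A i (f j)).det| :=
            le_abs_self _
        _ = (∏ i, |A i (f i)|) * (∏ i, d (f i)) * |(Matrix.of fun i j => A i (f j)).det| := by
            rw [abs_mul, abs_mul, Finset.abs_prod,
              abs_of_nonneg (Finset.prod_nonneg fun i _ => hd0 _)]
        _ ≤ 1 * Real.exp (-2 * b * t) * (k.factorial : ℝ) := by
            have h1 : (∏ i, |A i (f i)|) ≤ 1 :=
              Finset.prod_le_one (fun i _ => abs_nonneg _) (fun i _ => hA _ _)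
            have h2 : (∏ i, d (f i)) ≤ Real.exp (-2 * b * t) := by
              obtain ⟨i₀, hi₀⟩ := hsub f hf
              calc (∏ i, d (f i))
                  = d (f i₀) * ∏ i ∈ univ.erase i₀, d (f i) :=
                    (Finset.mul_prod_erase univ _ (mem_univ i₀)).symm
                _ ≤ Real.exp (-2 * b * t) * 1 := by
                    apply mul_le_mul (hdlt _ hi₀)
                      (Finset.prod_le_one (fun i _ => hd0 _) (fun i _ => hd1 _))
                      (Finset.prod_nonneg fun i _ => hd0 _) (Real.exp_pos _).le
                _ = Real.exp (-2 * b * t) := mul_one _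
            have h3 : |(Matrix.of fun i j => A i (f j)).det| ≤ (k.factorial : ℝ) := by
              have := Matrix.det_le (A := Matrix.of fun i j => A i (f j))
                (abv := AbsoluteValue.abs) (x := (1 : ℝ)) (fun i j => hA _ _)
              simpa using this
            have hprodd : 0 ≤ ∏ i, d (f i) := Finset.prod_nonneg fun i _ => hd0 _
            exact mul_le_mul (mul_le_mul h1 h2 hprodd zero_le_one) h3 (abs_nonneg _)
              (by positivity)
        _ = (k.factorial : ℝ) * Real.exp (-2 * b * t) := by ring
    · rw [if_neg hf]
      obtain ⟨a, a', haa', hne⟩ := Function.not_injective_iff.mp hf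
      have : (Matrix.of fun i j => A i (f j)).det = 0 := by
        apply Matrix.det_zero_of_column_eq hne
        intro p
        simp [haa']
      rw [this, mul_zero]
  calc (∑ f : Fin k → Fin m,
        (∏ i, A i (f i)) * (∏ i, d (f i)) * (Matrix.of fun i j => A i (f j)).det)
      ≤ ∑ f : Fin k → Fin m,
          (if Function.Injective f then (k.factorial : ℝ) * Real.exp (-2 * b * t) else 0) :=
        Finset.sum_le_sum fun f _ => habs f
    _ = ((univ.filter (fun f : Fin k → Fin m => Function.Injective f)).card : ℝ) *
          ((k.factorial : ℝ) * Real.exp (-2 * b * t)) := by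
        rw [Finset.sum_ite, Finset.sum_const, Finset.sum_const_zero, add_zero, nsmul_eq_mul]
    _ = ((m.descFactorial k : ℕ) : ℝ) * ((k.factorial : ℝ) * Real.exp (-2 * b * t)) := by
        congr 2
        rw [← Fintype.card_subtype,
          Fintype.card_congr (Equiv.subtypeInjectiveEquivEmbedding (Fin k) (Fin m)),
          Fintype.card_embedding_eq]
        simp
    _ = (m.choose k : ℝ) * (k.factorial : ℝ) ^ 2 * (Real.exp (-b * t)) ^ 2 := by
        have he : Real.exp (-b * t) ^ 2 = Real.exp (-2 * b * t) := by
          rw [← Real.exp_nat_mul]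
          congr 1
          push_cast
          ring
        rw [he, Nat.descFactorial_eq_factorial_mul_choose]
        push_cast
        ring


end Aux

/-- The conclusion of Lemma 1 of the paper: the density
`φ(t) = √(det G(t))`, with `G(t) = A · diag(exp(−2√(λ_l) t)) · Aᵀ` the Gram
matrix of the stable Jacobi fields, is integrable on `[0,∞)` with integral
bounded by a constant depending only on `k`, `m` and `λ*`. -/
theorem sqrt_det_gram_integrable (k m : ℕ) (hk : 1 ≤ k) (hkm : k ≤ m)
    (A : Matrix (Fin k) (Fin m) ℝ) (hA : ∀ i l, |A i l| ≤ 1)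
    (lam : Fin m → ℝ) (hlam : ∀ l, 0 ≤ lam l)
    (lamstar : ℝ) (hpos : 0 < lamstar)
    (hsub : ∀ s : Fin k → Fin m, Function.Injective s → ∃ i, lamstar ≤ lam (s i)) :
    IntegrableOn
      (fun t : ℝ =>
        Real.sqrt
          ((A * Matrix.diagonal (fun l => Real.exp (-2 * Real.sqrt (lam l) * t)) * Aᵀ).det))
      (Set.Ici (0 : ℝ)) ∧
    ∫ t in Set.Ici (0 : ℝ),
        Real.sqrt
          ((A * Matrix.diagonal (fun l => Real.exp (-2 * Real.sqrt (lam l) * t)) * Aᵀ).det) ≤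
      Real.sqrt (m.choose k : ℝ) * (Nat.factorial k : ℝ) / Real.sqrt lamstar := by
  set b := Real.sqrt lamstar with hbdef
  have hb : 0 < b := Real.sqrt_pos.mpr hpos
  set K : ℝ := Real.sqrt (m.choose k : ℝ) * (Nat.factorial k : ℝ) with hKdef
  have hK0 : 0 ≤ K := by positivity
  set φ : ℝ → ℝ := fun t =>
    Real.sqrt
      ((A * Matrix.diagonal (fun l => Real.exp (-2 * Real.sqrt (lam l) * t)) * Aᵀ).det)
    with hφdef
  -- pointwise bound
  have hbound : ∀ t ∈ Set.Ici (0 : ℝ), φ t ≤ K * Real.exp (-b * t) := by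
    intro t ht
    have h1 := det_gram_le k m A hA lam hlam lamstar hpos hsub ht
    have h2 : (m.choose k : ℝ) * (k.factorial : ℝ) ^ 2 * (Real.exp (-b * t)) ^ 2 =
        (K * Real.exp (-b * t)) ^ 2 := by
      rw [hKdef, mul_pow, mul_pow, Real.sq_sqrt (by positivity)]
    calc φ t ≤ Real.sqrt ((K * Real.exp (-b * t)) ^ 2) := by
          rw [← h2]; exact Real.sqrt_le_sqrt h1
      _ = K * Real.exp (-b * t) := Real.sqrt_sq (by positivity)
  -- continuity
  have hcont : Continuous φ := by
    apply Real.continuous_sqrt.comp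
    apply Continuous.matrix_det
    apply Continuous.matrix_mul
    · apply Continuous.matrix_mul continuous_const
      apply Continuous.matrix_diagonal
      apply continuous_pi
      intro l
      exact Real.continuous_exp.comp (continuous_const.mul continuous_id)
    · exact continuous_const
  -- integrability of the dominating function
  have hgint : IntegrableOn (fun t => K * Real.exp (-b * t)) (Set.Ici (0 : ℝ)) := by
    rw [integrableOn_Ici_iff_integrableOn_Ioi]
    exact (exp_neg_integrableOn_Ioi 0 hb).const_mul K
  have hφint : IntegrableOn φ (Set.Ici (0 : ℝ)) := by
    apply Integrable.mono' hgint (hcont.aestronglyMeasurable.restrict)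
    rw [ae_restrict_iff' measurableSet_Ici]
    filter_upwards with t ht
    rw [Real.norm_eq_abs, abs_of_nonneg (Real.sqrt_nonneg _)]
    exact hbound t ht
  refine ⟨hφint, ?_⟩
  have hexp : ∫ t in Set.Ioi (0 : ℝ), Real.exp (-b * t) = b⁻¹ := by
    have := integral_comp_mul_left_Ioi (fun x => Real.exp (-x)) 0 hb
    simp only [mul_zero, integral_exp_neg_Ioi, neg_zero, Real.exp_zero, smul_eq_mul,
      mul_one] at this
    simpa [neg_mul] using this
  calc ∫ t in Set.Ici (0 : ℝ), φ t
      ≤ ∫ t in Set.Ici (0 : ℝ), K * Real.exp (-b * t) :=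
        setIntegral_mono_on hφint hgint measurableSet_Ici hbound
    _ = K * ∫ t in Set.Ioi (0 : ℝ), Real.exp (-b * t) := by
        rw [integral_Ici_eq_integral_Ioi, MeasureTheory.integral_const_mul]
    _ = K * b⁻¹ := by rw [hexp]
    _ = K / b := by rw [div_eq_mul_inv]
end

section
/- Let k, m be natural numbers with k ≤ m, let A be any real k × m matrix (A : Matrix (Fin k) (Fin m) ℝ), and let λ : Fin m → ℝ satisfy λ l ≥ 0 for all l. For t ∈ ℝ define G(t) := A * Matrix.diagonal (fun l => Real.exp (−2 * Real.sqrt (λ l) * t)) * Aᵀ. Then the function t ↦ det (G t) is nonincreasing on ℝ: for all s ≤ t, det (G t) ≤ det (G s). -/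
/-!
For positive semidefinite `P`, `Q` with `P` invertible, `P + Q = S (1 + S⁻¹ Q S⁻¹) S` where
`S = √P`, and `1 + S⁻¹ Q S⁻¹` has all eigenvalues `≥ 1`; hence `det P ≤ det (P + Q)`, i.e. the
determinant is monotone on the positive semidefinite cone. Since every weight
`exp (-2 √λ t)` decreases in `t`, the Gram matrix at time `s ≤ t` is the one at time `t` plus
the positive semidefinite matrix `A · diag (differences of weights) · Aᵀ`.
-/

open Matrix

namespace Matrix

variable {n : Type*} [Fintype n] [DecidableEq n]

open scoped MatrixOrder Pointwise in
lemma PosSemidef.one_le_det_one_add {R : Matrix n n ℝ} (hR : R.PosSemidef) :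
    1 ≤ (1 + R).det := by
  have hM := (PosSemidef.one.add hR).isHermitian
  rw [hM.det_eq_prod_eigenvalues]
  refine Finset.one_le_prod fun i _ ↦ ?_
  have hi := hM.eigenvalues_mem_spectrum_real i
  have hspec : spectrum ℝ (1 + R) = ({1} : Set ℝ) + spectrum ℝ R := by
    rw [spectrum.singleton_add_eq, map_one]
  rw [hspec] at hi
  obtain ⟨_, rfl, μ, hμ, hsum⟩ := hi
  have hμ0 := spectrum_nonneg_of_nonneg hR.nonneg hμ
  simp only [RCLike.ofReal_real_eq_id, id]
  linarith

open scoped MatrixOrder in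
lemma PosSemidef.det_le_det_add {P Q : Matrix n n ℝ} (hP : P.PosSemidef) (hQ : Q.PosSemidef) :
    P.det ≤ (P + Q).det := by
  rcases eq_or_ne P.det 0 with hP0 | hP0
  · exact hP0 ▸ (hP.add hQ).det_nonneg
  set S := CFC.sqrt P
  have hS : S.PosSemidef := (CFC.sqrt_nonneg P).posSemidef
  have hSS : S * S = P := CFC.sqrt_mul_sqrt_self P hP.nonneg
  have hSu : IsUnit S.det :=
    isUnit_iff_ne_zero.mpr fun h ↦ hP0 (by rw [← hSS, det_mul, h, zero_mul])
  have hR : (S⁻¹ * Q * S⁻¹).PosSemidef := by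
    have hST : Sᵀ = S := by simpa using hS.isHermitian.eq
    simpa [transpose_nonsing_inv, hST] using hQ.mul_mul_conjTranspose_same S⁻¹
  have hfactor : P + Q = S * (1 + S⁻¹ * Q * S⁻¹) * S := by
    rw [mul_add, mul_one, add_mul, hSS, ← mul_assoc, ← mul_assoc, mul_nonsing_inv _ hSu, one_mul,
      mul_assoc, nonsing_inv_mul _ hSu, mul_one]
  rw [hfactor, det_mul, det_mul, ← hSS, det_mul]
  have hR1 := hR.one_le_det_one_add
  have hS0 := hS.det_nonneg
  nlinarith

lemma posSemidef_mul_diagonal_mul_transpose {k m : Type*} [Fintype k] [Fintype m] [DecidableEq m]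
    (A : Matrix k m ℝ) {d : m → ℝ} (hd : 0 ≤ d) : (A * diagonal d * Aᵀ).PosSemidef := by
  simpa using (posSemidef_diagonal_iff.mpr hd).mul_mul_conjTranspose_same A

lemma det_mul_diagonal_mul_transpose_le_of_le {k m : Type*} [Fintype k] [DecidableEq k]
    [Fintype m] [DecidableEq m] (A : Matrix k m ℝ) {d e : m → ℝ} (hd : 0 ≤ d) (hde : d ≤ e) :
    (A * diagonal d * Aᵀ).det ≤ (A * diagonal e * Aᵀ).det := by
  have hsplit : A * diagonal e * Aᵀ = A * diagonal d * Aᵀ + A * diagonal (e - d) * Aᵀ := by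
    rw [← Matrix.add_mul, ← Matrix.mul_add, diagonal_add]
    simp
  rw [hsplit]
  exact (posSemidef_mul_diagonal_mul_transpose A hd).det_le_det_add
    (posSemidef_mul_diagonal_mul_transpose A (sub_nonneg.mpr hde))

end Matrix

theorem det_gram_antitone_general (k m : ℕ)
    (A : Matrix (Fin k) (Fin m) ℝ)
    (lam : Fin m → ℝ) :
    ∀ s t : ℝ, s ≤ t →
      (A * Matrix.diagonal (fun l => Real.exp (-2 * Real.sqrt (lam l) * t)) * Aᵀ).det ≤
      (A * Matrix.diagonal (fun l => Real.exp (-2 * Real.sqrt (lam l) * s)) * Aᵀ).det := by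
  intro s t hst
  refine det_mul_diagonal_mul_transpose_le_of_le A (fun l ↦ (Real.exp_pos _).le) fun l ↦ ?_
  have hsqrt : 0 ≤ Real.sqrt (lam l) := Real.sqrt_nonneg _
  exact Real.exp_le_exp.mpr (by nlinarith)

/-- Monotonicity of the squared Jacobi-field density (STEP 5 of the proof of
Theorem 1(ii) of the paper): for any real `k × m` matrix `A` and nonnegative
`λ l`, the function `t ↦ det (A · diag(exp(−2√(λ_l) t)) · Aᵀ)` is
nonincreasing on `ℝ`. -/
theorem det_gram_antitone (k m : ℕ) (hkm : k ≤ m)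
    (A : Matrix (Fin k) (Fin m) ℝ)
    (lam : Fin m → ℝ) (hlam : ∀ l, 0 ≤ lam l) :
    ∀ s t : ℝ, s ≤ t →
      (A * Matrix.diagonal (fun l => Real.exp (-2 * Real.sqrt (lam l) * t)) * Aᵀ).det ≤
      (A * Matrix.diagonal (fun l => Real.exp (-2 * Real.sqrt (lam l) * s)) * Aᵀ).det :=
  det_gram_antitone_general k m A lam
end
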